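/- arXiv:2203.15921 — 4 statements merged into one kernel-verified Lean document; each statement's English description precedes it below -/
import Mathlib

section
/- For every n ≥ 1 and every θ = (θ_1, …, θ_n) ∈ ℝⁿ, the simple scalar butterfly matrix B(θ) is invertible and its ℓ∞ condition number satisfies κ_∞(B(θ)) = ‖B(θ)‖_∞ · ‖B(θ)⁻¹‖_∞ = ∏_{j=1}^n (1 + |sin(2θ_j)|). In particular, 1 ≤ κ_∞(B(θ)) ≤ 2ⁿ = N where N = 2ⁿ is the size of B(θ). -/
open Matrix Real

/-- The 2×2 rotation matrix with rows (cos α, sin α) and (−sin α, cos α). -/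
noncomputable def Rot (α : ℝ) : Matrix (Fin 2) (Fin 2) ℝ :=
  !![Real.cos α, Real.sin α; -Real.sin α, Real.cos α]

/-- The 2×2 unit lower triangular GENP factor `L(α)` with rows (1, 0) and (−tan α, 1). -/
noncomputable def Lmat (α : ℝ) : Matrix (Fin 2) (Fin 2) ℝ :=
  !![1, 0; -Real.tan α, 1]

/-- The 2×2 upper triangular GENP factor `U(α)` with rows (cos α, sin α) and (0, 1/cos α). -/
noncomputable def Umat (α : ℝ) : Matrix (Fin 2) (Fin 2) ℝ :=
  !![Real.cos α, Real.sin α; 0, (Real.cos α)⁻¹]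

/-- The `n`-fold Kronecker product `M(θ_1) ⊗ ⋯ ⊗ M(θ_n)` of 2×2 matrices, realized as the
matrix indexed by `Fin n → Fin 2` whose `(i, j)` entry is `∏ k, M(θ k) (i k) (j k)`. -/
noncomputable def kronPow {n : ℕ} (M : ℝ → Matrix (Fin 2) (Fin 2) ℝ) (θ : Fin n → ℝ) :
    Matrix (Fin n → Fin 2) (Fin n → Fin 2) ℝ :=
  fun i j => ∏ k, M (θ k) (i k) (j k)

/-- The simple scalar butterfly matrix `B(θ) = R(θ_1) ⊗ ⋯ ⊗ R(θ_n)`. -/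
noncomputable def butterfly {n : ℕ} (θ : Fin n → ℝ) :
    Matrix (Fin n → Fin 2) (Fin n → Fin 2) ℝ :=
  kronPow Rot θ

/-- The induced ℓ∞ operator norm of a real matrix: the maximum absolute row sum
`‖M‖_∞ = max_i Σ_j |M_{ij}|`. -/
noncomputable def linfNorm {m p : Type*} [Fintype m] [Fintype p] (M : Matrix m p ℝ) : ℝ :=
  ⨆ i, ∑ j, |M i j|

lemma rot_mul_rot_neg (α : ℝ) : Rot α * Rot (-α) = 1 := by
  ext i j
  fin_cases i <;> fin_cases j <;>
    simp [Rot, Matrix.mul_apply, Fin.sum_univ_two] <;>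
    nlinarith [sin_sq_add_cos_sq α]

lemma kronPow_mul {n : ℕ} (M N : ℝ → Matrix (Fin 2) (Fin 2) ℝ) (θ η : Fin n → ℝ) :
    kronPow M θ * kronPow N η = fun i j => ∏ k, (M (θ k) * N (η k)) (i k) (j k) := by
  ext i j
  simp only [Matrix.mul_apply, kronPow]
  rw [Finset.prod_univ_sum]
  exact Finset.sum_congr rfl fun x _ => (Finset.prod_mul_distrib).symm

lemma rot_rowsum (α : ℝ) (i : Fin 2) : ∑ j, |Rot α i j| = |Real.cos α| + |Real.sin α| := by
  fin_cases i <;> simp [Rot, Fin.sum_univ_two, abs_neg] <;> ring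

lemma butterfly_mul_inv {n : ℕ} (θ : Fin n → ℝ) :
    butterfly θ * butterfly (fun k => -θ k) = 1 := by
  rw [butterfly, butterfly, kronPow_mul]
  ext i j
  simp only [rot_mul_rot_neg, Matrix.one_apply]
  by_cases h : i = j
  · subst h; simp
  · rw [if_neg h]
    obtain ⟨k, hk⟩ := Function.ne_iff.mp h
    exact Finset.prod_eq_zero (Finset.mem_univ k) (by simp [hk])

lemma butterfly_linf {n : ℕ} (θ : Fin n → ℝ) :
    linfNorm (butterfly θ) = ∏ k, (|Real.cos (θ k)| + |Real.sin (θ k)|) := by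
  have h : ∀ i : Fin n → Fin 2, ∑ j, |butterfly θ i j|
      = ∏ k, (|Real.cos (θ k)| + |Real.sin (θ k)|) := by
    intro i
    have : ∀ j : Fin n → Fin 2, |butterfly θ i j| = ∏ k, |Rot (θ k) (i k) (j k)| := by
      intro j; rw [butterfly, kronPow, Finset.abs_prod]
    simp_rw [this]
    have key : (∏ k, ∑ jk : Fin 2, |Rot (θ k) (i k) jk|)
        = ∑ j : Fin n → Fin 2, ∏ k, |Rot (θ k) (i k) (j k)| := by
      rw [Finset.prod_univ_sum, Fintype.piFinset_univ]
    rw [← key]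
    exact Finset.prod_congr rfl fun k _ => rot_rowsum (θ k) (i k)
  simp only [linfNorm, h]
  exact ciSup_const


/-- For every `n ≥ 1` and `θ ∈ ℝⁿ`, the simple scalar butterfly matrix `B(θ)` is
invertible and its ℓ∞ condition number satisfies
`κ_∞(B(θ)) = ‖B(θ)‖_∞ · ‖B(θ)⁻¹‖_∞ = ∏_j (1 + |sin(2θ_j)|)`; in particular
`1 ≤ κ_∞(B(θ)) ≤ 2ⁿ = N`. -/
theorem butterfly_cond_linf {n : ℕ} (hn : 1 ≤ n) (θ : Fin n → ℝ) :
    IsUnit (butterfly θ) ∧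
    linfNorm (butterfly θ) * linfNorm (butterfly θ)⁻¹ =
      ∏ j, (1 + |Real.sin (2 * θ j)|) ∧
    1 ≤ ∏ j, (1 + |Real.sin (2 * θ j)|) ∧
    ∏ j, (1 + |Real.sin (2 * θ j)|) ≤ (2 : ℝ) ^ n := by
  have hmul := butterfly_mul_inv θ
  have hmul' : butterfly (fun k => -θ k) * butterfly θ = 1 := mul_eq_one_comm.mp hmul
  refine ⟨⟨⟨butterfly θ, butterfly (fun k => -θ k), hmul, hmul'⟩, rfl⟩, ?_, ?_, ?_⟩
  · have hinv : (butterfly θ)⁻¹ = butterfly (fun k => -θ k) := Matrix.inv_eq_right_inv hmul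
    rw [hinv, butterfly_linf, butterfly_linf, ← Finset.prod_mul_distrib]
    refine Finset.prod_congr rfl fun k _ => ?_
    simp only [Real.cos_neg, Real.sin_neg, abs_neg]
    rw [Real.sin_two_mul, abs_mul, abs_mul, abs_two]
    have h1 : |Real.cos (θ k)| ^ 2 + |Real.sin (θ k)| ^ 2 = 1 := by
      rw [sq_abs, sq_abs]; exact Real.cos_sq_add_sin_sq _
    linear_combination h1
  · calc (1:ℝ) = ∏ _j : Fin n, (1:ℝ) := by simp
      _ ≤ ∏ j, (1 + |Real.sin (2 * θ j)|) :=
          Finset.prod_le_prod (fun j _ => zero_le_one)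
            (fun j _ => by have := abs_nonneg (Real.sin (2 * θ j)); linarith)
  · calc ∏ j, (1 + |Real.sin (2 * θ j)|) ≤ ∏ _j : Fin n, (2 : ℝ) :=
          Finset.prod_le_prod (fun j _ => by positivity)
            (fun j _ => by
              have := abs_le.mpr ⟨Real.neg_one_le_sin (2 * θ j), Real.sin_le_one (2 * θ j)⟩
              linarith)
      _ = (2 : ℝ) ^ n := by simp
end

section
/- Let n ≥ 1 and let μ_n be the product of n copies of the uniform distribution on [0, 2π). Then the expected GEPP max-norm growth factor of a Haar-butterfly matrix equals N^α for α = log₂(4/π): ∫ ∏_{j=1}^n (1 + min(tan²θ_j, 1/tan²θ_j)) dμ_n(θ) = (4/π)ⁿ = N^{log₂(4/π)}, where N = 2ⁿ. (Here ∏_{j=1}^n (1 + min(tan²θ_j, 1/tan²θ_j)) is the GEPP growth factor ρ of the Haar-butterfly matrix B(θ).) -/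
/-!
The growth factor of a single rotation, `1 + min (tan² θ, cot² θ)`, equals
`1 / max (cos² θ, sin² θ)`: a continuous `π/2`-periodic function, symmetric about `π/4`, equal to
`sec² θ` on `[0, π/4]`. Its integral over `[0, 2π)` is therefore `8 tan (π/4) = 8`, so its mean
under the uniform distribution is `4/π`, and Fubini turns the expectation of the product over
`n` independent angles into `(4/π)ⁿ`. The exponent form is `(4/π)ⁿ = 2^(n log₂(4/π))`.
-/

open MeasureTheory Real

/-- The uniform probability distribution on `[0, 2π)`: `(2π)⁻¹·λ` restricted to `[0, 2π)`. -/
noncomputable def unif : Measure ℝ :=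
  (ENNReal.ofReal (2 * π))⁻¹ • volume.restrict (Set.Ico 0 (2 * π))

/-- The product `μ_n` of `n` independent copies of the uniform distribution on `[0, 2π)`,
the distribution of the angles of a Haar-butterfly matrix `B(θ) = R(θ_1) ⊗ ⋯ ⊗ R(θ_n)`. -/
noncomputable def μpi (n : ℕ) : Measure (Fin n → ℝ) :=
  Measure.pi fun _ => unif

instance isProbabilityMeasure_unif : IsProbabilityMeasure unif := by
  constructor
  rw [unif, Measure.smul_apply, Measure.restrict_apply MeasurableSet.univ, Set.univ_inter,
    Real.volume_Ico, sub_zero, smul_eq_mul]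
  exact ENNReal.inv_mul_cancel (by simp [pi_pos]) ENNReal.ofReal_ne_top

theorem integral_unif (f : ℝ → ℝ) : ∫ x, f x ∂unif = (2 * π)⁻¹ * ∫ x in 0..2 * π, f x := by
  rw [unif, integral_smul_measure, setIntegral_congr_set Ico_ae_eq_Ioc,
    ← intervalIntegral.integral_of_le (by positivity), ENNReal.toReal_inv,
    ENNReal.toReal_ofReal (by positivity), smul_eq_mul]

-- Also valid where `cos x = 0`: there Lean's `tan x = sin x / 0` is `0`, and `0⁻¹ = 0`.
theorem one_add_min_tan_sq_eq (x : ℝ) :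
    1 + min (tan x ^ 2) (tan x ^ 2)⁻¹ = (max (cos x ^ 2) (sin x ^ 2))⁻¹ := by
  have hsum := cos_sq_add_sin_sq x
  rw [tan_eq_sin_div_cos, div_pow, inv_div]
  rcases eq_or_ne (cos x) 0 with hc | hc
  · have hs : sin x ^ 2 = 1 := by rw [hc] at hsum; linarith
    simp [hc, hs]
  rcases eq_or_ne (sin x) 0 with hs | hs
  · have hc' : cos x ^ 2 = 1 := by rw [hs] at hsum; linarith
    simp [hs, hc']
  have hc2 : 0 < cos x ^ 2 := by positivity
  have hs2 : 0 < sin x ^ 2 := by positivity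
  rcases le_total (sin x ^ 2) (cos x ^ 2) with h | h
  · rw [min_eq_left ((div_le_div_iff₀ hc2 hs2).2 (by nlinarith)), max_eq_left h]
    field_simp
    linarith
  · rw [min_eq_right ((div_le_div_iff₀ hs2 hc2).2 (by nlinarith)), max_eq_right h]
    field_simp
    linarith

theorem continuous_inv_max_cos_sq_sin_sq :
    Continuous fun x => (max (cos x ^ 2) (sin x ^ 2))⁻¹ :=
  (show Continuous fun x => max (cos x ^ 2) (sin x ^ 2) by fun_prop).inv₀ fun x => by
    linarith [le_max_left (cos x ^ 2) (sin x ^ 2), le_max_right (cos x ^ 2) (sin x ^ 2),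
      cos_sq_add_sin_sq x]

theorem periodic_inv_max_cos_sq_sin_sq :
    Function.Periodic (fun x => (max (cos x ^ 2) (sin x ^ 2))⁻¹) (π / 2) := by
  intro x
  simp only [cos_add_pi_div_two, sin_add_pi_div_two, neg_sq, max_comm]

theorem integral_inv_max_cos_sq_sin_sq_zero_pi_div_four :
    ∫ x in 0..π / 4, (max (cos x ^ 2) (sin x ^ 2))⁻¹ = 1 := by
  have hpi := pi_pos
  have hcos : ∀ x ∈ Set.uIcc 0 (π / 4), cos x ≠ 0 := fun x hx => by
    rw [Set.uIcc_of_le (by positivity)] at hx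
    exact (cos_pos_of_mem_Ioo ⟨by linarith [hx.1], by linarith [hx.2]⟩).ne'
  have hmax : Set.EqOn (fun x => (max (cos x ^ 2) (sin x ^ 2))⁻¹) (fun x => 1 / cos x ^ 2)
      (Set.uIcc 0 (π / 4)) := by
    intro x hx
    rw [Set.uIcc_of_le (by positivity)] at hx
    have : 0 ≤ cos (2 * x) := cos_nonneg_of_mem_Icc ⟨by linarith [hx.1], by linarith [hx.2]⟩
    rw [cos_two_mul'] at this
    simp only [max_eq_left (by linarith : sin x ^ 2 ≤ cos x ^ 2), one_div]
  rw [intervalIntegral.integral_congr hmax, intervalIntegral.integral_eq_sub_of_hasDerivAt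
    (fun x hx => hasDerivAt_tan (hcos x hx)), tan_pi_div_four, tan_zero, sub_zero]
  exact (continuousOn_const.div (continuous_cos.pow 2).continuousOn
    fun x hx => pow_ne_zero 2 (hcos x hx)).intervalIntegrable

theorem integral_inv_max_cos_sq_sin_sq_zero_pi_div_two :
    ∫ x in 0..π / 2, (max (cos x ^ 2) (sin x ^ 2))⁻¹ = 2 := by
  have hint := continuous_inv_max_cos_sq_sin_sq.intervalIntegrable (μ := volume)
  have hsymm : ∫ x in π / 4..π / 2, (max (cos x ^ 2) (sin x ^ 2))⁻¹ =
      ∫ x in 0..π / 4, (max (cos x ^ 2) (sin x ^ 2))⁻¹ := by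
    -- `x ↦ π/2 - x` swaps `cos` and `sin`
    have := intervalIntegral.integral_comp_sub_left
      (fun x => (max (cos x ^ 2) (sin x ^ 2))⁻¹) (a := 0) (b := π / 4) (π / 2)
    simp only [cos_pi_div_two_sub, sin_pi_div_two_sub, max_comm] at this
    rw [this]; congr 1 <;> ring
  rw [← intervalIntegral.integral_add_adjacent_intervals (hint 0 (π / 4)) (hint _ _), hsymm,
    integral_inv_max_cos_sq_sin_sq_zero_pi_div_four]
  norm_num

theorem integral_inv_max_cos_sq_sin_sq_zero_two_pi :
    ∫ x in 0..2 * π, (max (cos x ^ 2) (sin x ^ 2))⁻¹ = 8 := by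
  have h2pi : 2 * π = 0 + (4 : ℤ) • (π / 2) := by simp only [zsmul_eq_mul]; push_cast; ring
  rw [h2pi, periodic_inv_max_cos_sq_sin_sq.intervalIntegral_add_zsmul_eq 4 0
      continuous_inv_max_cos_sq_sin_sq.intervalIntegrable, zero_add,
    integral_inv_max_cos_sq_sin_sq_zero_pi_div_two]
  norm_num

theorem expected_GEPP_maxNorm_growth_general (n : ℕ) :
    (∫ θ : Fin n → ℝ,
        ∏ j, (1 + min (Real.tan (θ j) ^ 2) (Real.tan (θ j) ^ 2)⁻¹) ∂(μpi n)) =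
      (4 / π) ^ n ∧
    ((4 / π : ℝ)) ^ n = ((2 : ℝ) ^ n) ^ Real.logb 2 (4 / π) := by
  refine ⟨?_, ?_⟩
  · simp only [one_add_min_tan_sq_eq]
    rw [μpi, integral_fintype_prod_eq_pow (fun x => (max (cos x ^ 2) (sin x ^ 2))⁻¹),
      Fintype.card_fin, integral_unif, integral_inv_max_cos_sq_sin_sq_zero_two_pi]
    field_simp
    ring
  · rw [← rpow_natCast 2 n, ← rpow_mul zero_le_two, mul_comm, rpow_mul zero_le_two,
      rpow_logb two_pos (by norm_num) (by positivity), rpow_natCast]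

/-- The expected GEPP max-norm growth factor of an `N×N` Haar-butterfly matrix (`N = 2ⁿ`)
is `N^α` for `α = log₂(4/π)`:
`∫ ∏_j (1 + min(tan²θ_j, 1/tan²θ_j)) dμ_n(θ) = (4/π)ⁿ = N^{log₂(4/π)}`. -/
theorem expected_GEPP_maxNorm_growth (n : ℕ) (hn : 1 ≤ n) :
    (∫ θ : Fin n → ℝ,
        ∏ j, (1 + min (Real.tan (θ j) ^ 2) (Real.tan (θ j) ^ 2)⁻¹) ∂(μpi n)) =
      (4 / π) ^ n ∧
    ((4 / π : ℝ)) ^ n = ((2 : ℝ) ^ n) ^ Real.logb 2 (4 / π) :=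
  expected_GEPP_maxNorm_growth_general n
end

section
/- Let n ≥ 1 and let μ_n be the product of n copies of the uniform distribution on [0, 2π). Then the expected product of the ℓ∞ condition number and the GEPP max-norm growth factor of a Haar-butterfly matrix equals N^{1+ζ} for ζ = log₂((2/π)(1 + log 2)): ∫ ∏_{j=1}^n (1 + |sin(2θ_j)|)·(1 + min(tan²θ_j, 1/tan²θ_j)) dμ_n(θ) = ((4/π)(1 + ln 2))ⁿ = N^{1 + log₂((2/π)(1 + ln 2))}, where N = 2ⁿ. -/
open MeasureTheory Real

/-! The integrand is a product of one-angle factors `condGrowth (θ j)`, so its expectation is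
the `n`-th power of `E[condGrowth θ]` for a uniform angle. `condGrowth` has period `π/2` and is
symmetric about `π/4`, and on `[0, π/4]` it equals `(1 + sin 2θ) / cos² θ`, the derivative of
`tan θ - 2 log cos θ`; hence `∫₀^{2π} condGrowth = 8 (1 + log 2)`. -/

lemma pow_rpow_one_add_logb {b x : ℝ} (hb : 0 < b) (hb₁ : b ≠ 1) (hx : 0 < x) (n : ℕ) :
    (b ^ n) ^ (1 + logb b x) = (b * x) ^ n := by
  rw [← rpow_natCast_mul hb.le, mul_comm, rpow_mul_natCast hb.le, rpow_add hb, rpow_one,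
    rpow_logb hb hb₁ hx]

lemma min_div_inv_eq_min_div_max {a b : ℝ} (ha : 0 ≤ a) (hb : 0 ≤ b) :
    min (a / b) (a / b)⁻¹ = min a b / max a b := by
  rcases ha.eq_or_lt with rfl | ha
  · simp [min_eq_left hb]
  rcases hb.eq_or_lt with rfl | hb
  · simp [min_eq_right ha.le]
  rcases le_total a b with hab | hab
  · rw [min_eq_left hab, max_eq_right hab, min_eq_left]
    rw [inv_div, div_le_div_iff₀ hb ha]
    nlinarith
  · rw [min_eq_right hab, max_eq_left hab, min_eq_right, inv_div]
    rw [inv_div, div_le_div_iff₀ ha hb]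
    nlinarith

instance : IsProbabilityMeasure unif where
  measure_univ := by
    rw [unif, Measure.smul_apply, Measure.restrict_apply MeasurableSet.univ, Set.univ_inter,
      volume_Ico, sub_zero, smul_eq_mul]
    exact ENNReal.inv_mul_cancel (by positivity) ENNReal.ofReal_ne_top

noncomputable def condGrowth (θ : ℝ) : ℝ :=
  (1 + |sin (2 * θ)|) * (1 + min (tan θ ^ 2) (tan θ ^ 2)⁻¹)

/-- Unlike `tan θ`, this form is visibly continuous; where `cos θ = 0` both sides agree
because `x / 0 = 0`. -/
lemma condGrowth_eq (θ : ℝ) : condGrowth θ =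
    (1 + |sin (2 * θ)|) * (1 + min (sin θ ^ 2) (cos θ ^ 2) / max (sin θ ^ 2) (cos θ ^ 2)) := by
  rw [condGrowth, tan_eq_sin_div_cos, div_pow,
    min_div_inv_eq_min_div_max (sq_nonneg _) (sq_nonneg _)]

lemma continuous_condGrowth : Continuous condGrowth := by
  have hmax (θ : ℝ) : max (sin θ ^ 2) (cos θ ^ 2) ≠ 0 := by
    nlinarith [sin_sq_add_cos_sq θ, le_max_left (sin θ ^ 2) (cos θ ^ 2),
      le_max_right (sin θ ^ 2) (cos θ ^ 2)]
  simp only [funext condGrowth_eq]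
  fun_prop (disch := exact hmax)

lemma condGrowth_periodic : Function.Periodic condGrowth (π / 2) := by
  intro θ
  rw [condGrowth, condGrowth, show 2 * (θ + π / 2) = 2 * θ + π by ring, sin_add_pi, abs_neg,
    tan_eq_sin_div_cos, sin_add_pi_div_two, cos_add_pi_div_two, div_neg, neg_sq, ← inv_div,
    ← tan_eq_sin_div_cos, inv_pow, inv_inv, min_comm]

lemma condGrowth_pi_div_two_sub (θ : ℝ) : condGrowth (π / 2 - θ) = condGrowth θ := by
  rw [condGrowth, condGrowth, show 2 * (π / 2 - θ) = π - 2 * θ by ring, sin_pi_sub,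
    tan_pi_div_two_sub, inv_pow, inv_inv, min_comm]

lemma hasDerivAt_tan_sub_two_mul_log_cos {θ : ℝ} (hθ : θ ∈ Set.Icc 0 (π / 4)) :
    HasDerivAt (fun x ↦ tan x - 2 * log (cos x)) (condGrowth θ) θ := by
  obtain ⟨h₀, h₁⟩ := hθ
  have hcos : 0 < cos θ := cos_pos_of_mem_Ioo ⟨by linarith [pi_pos], by linarith [pi_pos]⟩
  have hsin2 : 0 ≤ sin (2 * θ) := sin_nonneg_of_nonneg_of_le_pi (by linarith) (by linarith)
  have hsq : sin θ ^ 2 ≤ cos θ ^ 2 := by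
    have : 0 ≤ cos (2 * θ) := cos_nonneg_of_mem_Icc ⟨by linarith [pi_pos], by linarith⟩
    nlinarith [cos_sq' θ, cos_two_mul θ]
  have hval : condGrowth θ = 1 / cos θ ^ 2 - 2 * (-sin θ / cos θ) := by
    rw [condGrowth_eq, abs_of_nonneg hsin2, min_eq_left hsq, max_eq_right hsq, sin_two_mul]
    field_simp
    linear_combination (1 + 2 * sin θ * cos θ) * sin_sq_add_cos_sq θ
  rw [hval]
  exact (hasDerivAt_tan hcos.ne').sub (((hasDerivAt_cos θ).log hcos.ne').const_mul 2)

lemma integral_condGrowth_zero_pi_div_four : ∫ θ in 0..π / 4, condGrowth θ = 1 + log 2 := by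
  have hle : (0 : ℝ) ≤ π / 4 := by positivity
  rw [intervalIntegral.integral_eq_sub_of_hasDerivAt
    (fun θ hθ ↦ hasDerivAt_tan_sub_two_mul_log_cos (Set.uIcc_of_le hle ▸ hθ))
    (continuous_condGrowth.intervalIntegrable _ _)]
  rw [tan_pi_div_four, cos_pi_div_four, tan_zero, cos_zero, log_one,
    log_div (by positivity) two_ne_zero, log_sqrt zero_le_two]
  ring

lemma integral_condGrowth_zero_pi_div_two : ∫ θ in 0..π / 2, condGrowth θ = 2 * (1 + log 2) := by
  have hint := continuous_condGrowth.intervalIntegrable (μ := volume)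
  have hsymm : ∫ θ in π / 4..π / 2, condGrowth θ = ∫ θ in 0..π / 4, condGrowth θ := by
    have := intervalIntegral.integral_comp_sub_left condGrowth (a := π / 4) (b := π / 2) (π / 2)
    simp only [condGrowth_pi_div_two_sub, sub_self] at this
    rwa [show π / 2 - π / 4 = π / 4 by ring] at this
  rw [← intervalIntegral.integral_add_adjacent_intervals (hint 0 (π / 4)) (hint _ _), hsymm,
    integral_condGrowth_zero_pi_div_four]
  ring

lemma integral_condGrowth_unif : ∫ θ, condGrowth θ ∂unif = 4 / π * (1 + log 2) := by
  have h2π : (0 : ℝ) ≤ 2 * π := by positivity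
  have hperiod : ∫ θ in 0..2 * π, condGrowth θ = 4 * ∫ θ in 0..π / 2, condGrowth θ := by
    have := condGrowth_periodic.intervalIntegral_add_zsmul_eq 4 0
      (continuous_condGrowth.intervalIntegrable)
    norm_num at this
    rw [← this]; ring_nf
  rw [unif, integral_smul_measure, ENNReal.toReal_inv, ENNReal.toReal_ofReal h2π,
    integral_Ico_eq_integral_Ioc, ← intervalIntegral.integral_of_le h2π, hperiod,
    integral_condGrowth_zero_pi_div_two, smul_eq_mul]
  field_simp

theorem expected_cond_mul_growth_general (n : ℕ) :
    (∫ θ : Fin n → ℝ,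
        ∏ j, (1 + |Real.sin (2 * θ j)|) *
          (1 + min (Real.tan (θ j) ^ 2) (Real.tan (θ j) ^ 2)⁻¹) ∂(μpi n)) =
      (4 / π * (1 + Real.log 2)) ^ n ∧
    ((4 / π * (1 + Real.log 2) : ℝ)) ^ n =
      ((2 : ℝ) ^ n) ^ (1 + Real.logb 2 (2 / π * (1 + Real.log 2))) := by
  constructor
  · have := integral_fintype_prod_eq_pow (ι := Fin n) condGrowth (μ := unif)
    rwa [Fintype.card_fin, integral_condGrowth_unif] at this
  · have hpos : 0 < 2 / π * (1 + log 2) := by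
      have := log_pos one_lt_two
      positivity
    rw [pow_rpow_one_add_logb two_pos one_lt_two.ne' hpos]
    ring

/-- The expected product of the ℓ∞ condition number and the GEPP max-norm growth factor of
an `N×N` Haar-butterfly matrix (`N = 2ⁿ`) is `N^{1+ζ}` for `ζ = log₂((2/π)(1 + ln 2))`:
`∫ ∏_j (1 + |sin(2θ_j)|)(1 + min(tan²θ_j, 1/tan²θ_j)) dμ_n(θ) = ((4/π)(1 + ln 2))ⁿ`. -/
theorem expected_cond_mul_growth (n : ℕ) (hn : 1 ≤ n) :
    (∫ θ : Fin n → ℝ,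
        ∏ j, (1 + |Real.sin (2 * θ j)|) *
          (1 + min (Real.tan (θ j) ^ 2) (Real.tan (θ j) ^ 2)⁻¹) ∂(μpi n)) =
      (4 / π * (1 + Real.log 2)) ^ n ∧
    ((4 / π * (1 + Real.log 2) : ℝ)) ^ n =
      ((2 : ℝ) ^ n) ^ (1 + Real.logb 2 (2 / π * (1 + Real.log 2))) :=
  expected_cond_mul_growth_general n
end

section
/- For θ uniformly distributed on [0, 2π), the random variable ln(1 + min(tan²θ, 1/tan²θ)) has mean 2 ln 2 − 4G/π, where G = Σ_{k≥0} (−1)^k/(2k+1)² is Catalan's constant; that is, (2π)⁻¹ ∫₀^{2π} ln(1 + min(tan²θ, 1/tan²θ)) dθ = 2 ln 2 − (4/π)·Σ_{k=0}^∞ (−1)^k/(2k+1)². (This is the mean of the logarithm of the per-coordinate GEPP growth factor of a Haar-butterfly matrix.) -/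
open MeasureTheory Real
open Set Filter Topology

/-!
Write `L θ = log (1 + min (tan² θ, tan⁻² θ))`. Since `tan (θ + π/2) = -cot θ` and
`tan (π/2 - θ) = cot θ`, `L` has period `π/2` and is symmetric about `π/4`, so its integral over a
full period is `8 ∫₀^{π/4} L`; on `[0, π/4]` we have `L = log (1 + tan² θ) = -2 log cos θ`.
Finally `∫₀^{π/4} log cos` is determined by its sum with `∫₀^{π/4} log sin`, which is
`∫₀^{π/2} log sin = -(π/2) log 2`, and its difference, which the substitution `t = tan θ` turns
into `∫₀¹ -log t / (1 + t²) = ∑ₖ (-1)ᵏ ∫₀¹ t^{2k} (-log t) = ∑ₖ (-1)ᵏ / (2k+1)² = G`.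
-/

noncomputable def catalanConstant : ℝ := ∑' k : ℕ, (-1 : ℝ) ^ k / (2 * (k : ℝ) + 1) ^ 2

lemma intervalIntegrable_pow_mul_log (n : ℕ) (a b : ℝ) :
    IntervalIntegrable (fun t : ℝ => t ^ n * log t) volume a b :=
  (intervalIntegral.intervalIntegrable_log' (a := a) (b := b)).continuousOn_mul (continuousOn_pow n)

lemma tendsto_pow_mul_log_nhdsGT_zero {n : ℕ} (hn : n ≠ 0) :
    Tendsto (fun t : ℝ => t ^ n * log t) (𝓝[>] 0) (𝓝 0) := by
  simpa [mul_comm] using tendsto_log_mul_rpow_nhdsGT_zero (r := n) (by positivity)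

lemma integral_pow_mul_log_zero_one (n : ℕ) :
    ∫ t in (0 : ℝ)..1, t ^ n * log t = -1 / (n + 1) ^ 2 := by
  let F : ℝ → ℝ := fun t => t ^ (n + 1) * log t / (n + 1) - t ^ (n + 1) / (n + 1) ^ 2
  have hF : ∀ t ∈ Ioo (0 : ℝ) 1, HasDerivAt F (t ^ n * log t) t := by
    intro t ht
    have h := (((hasDerivAt_pow (n + 1) t).mul (hasDerivAt_log ht.1.ne')).div_const
      ((n : ℝ) + 1)).sub ((hasDerivAt_pow (n + 1) t).div_const (((n : ℝ) + 1) ^ 2))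
    refine h.congr_deriv ?_
    have ht0 := ht.1.ne'
    rw [Nat.add_sub_cancel, pow_succ]
    push_cast
    field_simp
    ring
  have h0 : Tendsto F (𝓝[>] 0) (𝓝 0) := by
    have hpow : Tendsto (fun t : ℝ => t ^ (n + 1)) (𝓝[>] 0) (𝓝 0) :=
      tendsto_nhdsWithin_of_tendsto_nhds
        (by simpa using (continuous_pow (M := ℝ) (n + 1)).tendsto 0)
    simpa using ((tendsto_pow_mul_log_nhdsGT_zero n.succ_ne_zero).div_const _).sub
      (hpow.div_const _)
  have h1 : Tendsto F (𝓝[<] 1) (𝓝 (-1 / (n + 1) ^ 2)) := by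
    have : ContinuousAt F 1 := by
      have := continuousAt_log one_ne_zero
      fun_prop
    simpa [F, neg_div] using this.tendsto.mono_left nhdsWithin_le_nhds
  rw [intervalIntegral.integral_eq_sub_of_hasDerivAt_of_tendsto zero_lt_one hF
    (intervalIntegrable_pow_mul_log n 0 1) h0 h1, sub_zero]

lemma setIntegral_Ioo_pow_mul_log (n : ℕ) :
    ∫ t in Ioo (0 : ℝ) 1, t ^ n * log t = -1 / (n + 1) ^ 2 := by
  rw [← integral_Ioc_eq_integral_Ioo, ← intervalIntegral.integral_of_le zero_le_one,
    integral_pow_mul_log_zero_one]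

lemma summable_one_div_odd_sq : Summable (fun k : ℕ => 1 / (2 * (k : ℝ) + 1) ^ 2) := by
  have h := (Real.summable_one_div_nat_pow.mpr one_lt_two).comp_injective
    (i := fun k : ℕ => 2 * k + 1) (fun a b hab => by simp only at hab; omega)
  simpa [Function.comp_def] using h

lemma hasSum_neg_one_pow_mul_pow_two_mul {t : ℝ} (ht : |t| < 1) (c : ℝ) :
    HasSum (fun k : ℕ => (-1) ^ k * (t ^ (2 * k) * c)) (c / (1 + t ^ 2)) := by
  have hr : |-t ^ 2| < 1 := by
    rw [abs_neg, abs_pow, sq_lt_one_iff_abs_lt_one, abs_abs]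
    exact ht
  have h := ((hasSum_geometric_of_abs_lt_one hr).mul_right c).congr_fun
    fun k => by rw [neg_pow (t ^ 2), ← pow_mul, mul_assoc]
  rwa [sub_neg_eq_add, ← div_eq_inv_mul] at h

lemma hasSum_integral_neg_log_div_one_add_sq :
    HasSum (fun k : ℕ => (-1 : ℝ) ^ k / (2 * (k : ℝ) + 1) ^ 2)
      (∫ t in Ioo (0 : ℝ) 1, -log t / (1 + t ^ 2)) := by
  let F : ℕ → ℝ → ℝ := fun k t => (-1) ^ k * -(t ^ (2 * k) * log t)
  have hF_int : ∀ k, IntegrableOn (F k) (Ioo 0 1) := fun k =>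
    (((intervalIntegrable_iff_integrableOn_Ioo_of_le zero_le_one).mp
      (intervalIntegrable_pow_mul_log (2 * k) 0 1)).neg).const_mul _
  have hcast : ∀ k : ℕ, ((2 * k : ℕ) : ℝ) + 1 = 2 * k + 1 := fun k => by push_cast; ring
  have hF_integral : ∀ k, ∫ t in Ioo (0 : ℝ) 1, F k t = (-1) ^ k / (2 * (k : ℝ) + 1) ^ 2 :=
    fun k => by
      simp only [F, integral_const_mul, integral_neg, setIntegral_Ioo_pow_mul_log, hcast]
      ring
  have hF_norm : ∀ k, ∫ t in Ioo (0 : ℝ) 1, ‖F k t‖ = 1 / (2 * (k : ℝ) + 1) ^ 2 := fun k => by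
    have hnorm : EqOn (fun t => ‖F k t‖) (fun t => -(t ^ (2 * k) * log t)) (Ioo 0 1) :=
      fun t ht => by
        have hlog : log t ≤ 0 := log_nonpos ht.1.le ht.2.le
        simp only [F, norm_mul, norm_pow, norm_neg, norm_one, one_pow, one_mul,
          norm_of_nonneg ht.1.le, norm_of_nonpos hlog, mul_neg]
    rw [setIntegral_congr_fun measurableSet_Ioo hnorm, integral_neg, setIntegral_Ioo_pow_mul_log,
      hcast, neg_div, neg_neg]
  have hF_sum : ∀ t ∈ Ioo (0 : ℝ) 1, HasSum (fun k => F k t) (-log t / (1 + t ^ 2)) :=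
    fun t ht => (hasSum_neg_one_pow_mul_pow_two_mul (abs_lt.mpr ⟨by linarith [ht.1], ht.2⟩)
      (-log t)).congr_fun fun k => by simp only [F, mul_neg]
  have h := hasSum_integral_of_summable_integral_norm hF_int
    (by simpa only [hF_norm] using summable_one_div_odd_sq)
  rw [setIntegral_congr_fun measurableSet_Ioo (fun t ht => (hF_sum t ht).tsum_eq)] at h
  simpa only [hF_integral] using h

lemma integral_neg_log_div_one_add_sq :
    ∫ t in Ioo (0 : ℝ) 1, -log t / (1 + t ^ 2) = catalanConstant :=
  hasSum_integral_neg_log_div_one_add_sq.tsum_eq.symm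

lemma arctan_image_Ioo_zero_one : arctan '' Ioo 0 1 = Ioo 0 (π / 4) := by
  rw [continuous_arctan.image_Ioo_of_strictMono arctan_strictMono, arctan_zero, arctan_one]

lemma log_cos_arctan_sub_log_sin_arctan {t : ℝ} (ht : 0 < t) :
    log (cos (arctan t)) - log (sin (arctan t)) = -log t := by
  have hcos := (cos_arctan_pos t).ne'
  rw [← tan_mul_cos hcos, tan_arctan, log_mul ht.ne' hcos]
  ring

lemma integral_log_cos_sub_integral_log_sin :
    (∫ x in (0 : ℝ)..π / 4, log (cos x)) - ∫ x in (0 : ℝ)..π / 4, log (sin x) =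
      catalanConstant := by
  rw [← intervalIntegral.integral_sub (f := fun x => log (cos x)) (g := fun x => log (sin x))
      intervalIntegrable_log_cos intervalIntegrable_log_sin,
    intervalIntegral.integral_of_le (by positivity), integral_Ioc_eq_integral_Ioo,
    ← arctan_image_Ioo_zero_one, integral_image_eq_integral_abs_deriv_smul measurableSet_Ioo
      (fun t _ => (hasDerivAt_arctan t).hasDerivWithinAt) arctan_injective.injOn,
    ← integral_neg_log_div_one_add_sq]
  refine setIntegral_congr_fun measurableSet_Ioo (fun t ht => ?_)
  rw [smul_eq_mul, log_cos_arctan_sub_log_sin_arctan ht.1, abs_of_pos (by positivity)]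
  ring

lemma integral_log_cos_add_integral_log_sin :
    (∫ x in (0 : ℝ)..π / 4, log (cos x)) + ∫ x in (0 : ℝ)..π / 4, log (sin x) =
      -log 2 * π / 2 := by
  have hreflect : ∫ x in (0 : ℝ)..π / 4, log (cos x) = ∫ x in π / 4..π / 2, log (sin x) := by
    simp_rw [← sin_pi_div_two_sub]
    rw [intervalIntegral.integral_comp_sub_left (fun x => log (sin x))]
    ring_nf
  rw [hreflect, add_comm, intervalIntegral.integral_add_adjacent_intervals
    (f := fun x => log (sin x)) intervalIntegrable_log_sin intervalIntegrable_log_sin,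
    integral_log_sin_zero_pi_div_two]

lemma integral_log_cos_zero_pi_div_four :
    ∫ x in (0 : ℝ)..π / 4, log (cos x) = catalanConstant / 2 - π / 4 * log 2 := by
  linarith [integral_log_cos_sub_integral_log_sin, integral_log_cos_add_integral_log_sin]

lemma intervalIntegral_zero_eq_two_smul_of_reflect {E : Type*} [NormedAddCommGroup E]
    [NormedSpace ℝ E] {f : ℝ → E} {T : ℝ} (hreflect : ∀ x, f (T - x) = f x)
    (hf : IntervalIntegrable f volume 0 T) :
    ∫ x in (0 : ℝ)..T, f x = (2 : ℝ) • ∫ x in (0 : ℝ)..T / 2, f x := by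
  have hmid : T / 2 ∈ uIcc 0 T := by
    rw [mem_uIcc]
    rcases le_total 0 T with hT | hT
    · exact Or.inl ⟨by linarith, by linarith⟩
    · exact Or.inr ⟨by linarith, by linarith⟩
  have hupper : ∫ x in T / 2..T, f x = ∫ x in (0 : ℝ)..T / 2, f x := by
    calc ∫ x in T / 2..T, f x = ∫ x in T / 2..T, f (T - x) := by simp only [hreflect]
      _ = ∫ x in (0 : ℝ)..T / 2, f x := by
        rw [intervalIntegral.integral_comp_sub_left, sub_self, sub_half]
  rw [← intervalIntegral.integral_add_adjacent_intervals
    (hf.mono_set (uIcc_subset_uIcc left_mem_uIcc hmid))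
    (hf.mono_set (uIcc_subset_uIcc hmid right_mem_uIcc)), hupper, two_smul]

noncomputable def logGrowthFactor (θ : ℝ) : ℝ := log (1 + min (tan θ ^ 2) (tan θ ^ 2)⁻¹)

-- Also at the poles of `tan`, thanks to the junk values `tan (π / 2) = 0` and `0⁻¹ = 0`.
lemma logGrowthFactor_periodic : Function.Periodic logGrowthFactor (π / 2) := by
  intro θ
  have htan : tan (θ + π / 2) ^ 2 = (tan θ ^ 2)⁻¹ := by
    rw [tan_eq_sin_div_cos, tan_eq_sin_div_cos, sin_add_pi_div_two, cos_add_pi_div_two]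
    field_simp
  rw [logGrowthFactor, logGrowthFactor, htan, inv_inv, min_comm]

lemma logGrowthFactor_pi_div_two_sub (θ : ℝ) :
    logGrowthFactor (π / 2 - θ) = logGrowthFactor θ := by
  rw [logGrowthFactor, logGrowthFactor, tan_pi_div_two_sub, inv_pow, inv_inv, min_comm]

lemma logGrowthFactor_eq_neg_two_mul_log_cos {θ : ℝ} (hθ : θ ∈ Icc 0 (π / 4)) :
    logGrowthFactor θ = -2 * log (cos θ) := by
  have hcos : 0 < cos θ :=
    cos_pos_of_mem_Ioo ⟨by linarith [hθ.1, pi_pos], by linarith [hθ.2, pi_pos]⟩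
  have htan₀ : 0 ≤ tan θ :=
    tan_nonneg_of_nonneg_of_le_pi_div_two hθ.1 (by linarith [hθ.2, pi_pos])
  have htan₁ : tan θ ^ 2 ≤ 1 := by
    refine pow_le_one₀ htan₀ (tan_pi_div_four ▸ strictMonoOn_tan.monotoneOn ?_ ?_ hθ.2) <;>
      constructor <;> linarith [hθ.1, hθ.2, pi_pos]
  have hmin : min (tan θ ^ 2) (tan θ ^ 2)⁻¹ = tan θ ^ 2 := by
    rcases (sq_nonneg (tan θ)).eq_or_lt with h | h
    · rw [← h, inv_zero, min_self]
    · exact min_eq_left (htan₁.trans ((one_le_inv₀ h).mpr htan₁))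
  rw [logGrowthFactor, hmin, ← inv_inv (1 + _), inv_one_add_tan_sq hcos.ne', log_inv, log_pow]
  push_cast
  ring

lemma logGrowthFactor_mem_Icc (θ : ℝ) : logGrowthFactor θ ∈ Icc 0 (log 2) := by
  have hmin₀ : 0 ≤ min (tan θ ^ 2) (tan θ ^ 2)⁻¹ := le_min (by positivity) (by positivity)
  have hmin₁ : min (tan θ ^ 2) (tan θ ^ 2)⁻¹ ≤ 1 := by
    rcases le_total (tan θ ^ 2) 1 with h | h
    · exact (min_le_left _ _).trans h
    · exact (min_le_right _ _).trans (inv_le_one_of_one_le₀ h)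
  exact ⟨log_nonneg (by linarith), log_le_log (by linarith) (by linarith)⟩

lemma measurable_logGrowthFactor : Measurable logGrowthFactor := by
  have htan : Measurable tan := by
    simp_rw [funext tan_eq_sin_div_cos]
    fun_prop
  unfold logGrowthFactor
  fun_prop

lemma intervalIntegrable_logGrowthFactor (a b : ℝ) :
    IntervalIntegrable logGrowthFactor volume a b := by
  refine (intervalIntegrable_const (c := log 2)).mono_fun'
    measurable_logGrowthFactor.aestronglyMeasurable (Eventually.of_forall fun θ => ?_)
  have h := logGrowthFactor_mem_Icc θ
  simpa [norm_of_nonneg h.1] using h.2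

lemma integral_logGrowthFactor_zero_two_pi :
    ∫ θ in (0 : ℝ)..2 * π, logGrowthFactor θ = 8 * ∫ θ in (0 : ℝ)..π / 4, logGrowthFactor θ := by
  have hperiod := logGrowthFactor_periodic.intervalIntegral_add_zsmul_eq 4 0
    intervalIntegrable_logGrowthFactor
  have hreflect := intervalIntegral_zero_eq_two_smul_of_reflect logGrowthFactor_pi_div_two_sub
    (intervalIntegrable_logGrowthFactor 0 (π / 2))
  rw [zero_add, zero_add, zsmul_eq_mul, show ((4 : ℤ) : ℝ) * (π / 2) = 2 * π by push_cast; ring]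
    at hperiod
  rw [hperiod, hreflect, smul_eq_mul, show π / 2 / 2 = π / 4 by ring]
  ring

lemma integral_logGrowthFactor_zero_pi_div_four :
    ∫ θ in (0 : ℝ)..π / 4, logGrowthFactor θ = -2 * ∫ θ in (0 : ℝ)..π / 4, log (cos θ) := by
  rw [← intervalIntegral.integral_const_mul]
  refine intervalIntegral.integral_congr fun θ hθ => ?_
  exact logGrowthFactor_eq_neg_two_mul_log_cos (by rwa [uIcc_of_le (by positivity)] at hθ)

/-- For `θ` uniform on `[0, 2π)`, the logarithm of the per-coordinate GEPP growth factor
of a Haar-butterfly matrix has mean `2 ln 2 − 4G/π`, `G` being Catalan's constant: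
`(2π)⁻¹ ∫₀^{2π} ln(1 + min(tan²θ, 1/tan²θ)) dθ = 2 ln 2 − (4/π)·Σ_{k≥0} (−1)^k/(2k+1)²`. -/
theorem log_GEPP_growth_mean :
    (2 * π)⁻¹ *
        (∫ θ in Set.Ico (0 : ℝ) (2 * π),
          Real.log (1 + min (Real.tan θ ^ 2) (Real.tan θ ^ 2)⁻¹)) =
      2 * Real.log 2 - (4 / π) * ∑' k : ℕ, (-1 : ℝ) ^ k / (2 * (k : ℝ) + 1) ^ 2 := by
  change (2 * π)⁻¹ * (∫ θ in Ico 0 (2 * π), logGrowthFactor θ) = 2 * log 2 - 4 / π * catalanConstant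
  rw [integral_Ico_eq_integral_Ioo, ← integral_Ioc_eq_integral_Ioo,
    ← intervalIntegral.integral_of_le (by positivity), integral_logGrowthFactor_zero_two_pi,
    integral_logGrowthFactor_zero_pi_div_four, integral_log_cos_zero_pi_div_four]
  field_simp
  ring
end
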